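/- Let q ≥ 2 be an integer, let A be a nonnegative, nonzero, symmetric q×q real matrix, and let 𝒢 be a family of finite simple graphs. Suppose there exist constants r > 1 and M > 0 such that for all z in the open disk 𝔻_r of radius r, all G ∈ 𝒢, all vertices v ∈ V(G), all i ∈ [q] and all boundary conditions σ : Λ → [q] with Λ ⊆ V(G) ∖ {v}, the ratio P^σ_{G,v,i;A} has no pole at z and satisfies |P^σ_{G,v,i;A}(z)| ≤ M. Then there exists C > 0 such that the graph homomorphism measure μ_{G,A} satisfies strong spatial mixing on 𝒢 with exponential rate r: for every G ∈ 𝒢, v ∈ V(G), i ∈ [q], Λ ⊆ V(G)∖{v} and boundary conditions σ, τ on Λ, |Pr_μ[Ψ(v)=i | σ] − Pr_μ[Ψ(v)=i | τ]| ≤ C·r^{−d_G(v,σ≠τ)}. -/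

import Mathlib

/-!
Write `W = A - J`, so that every edge weight of `J + zW` is `1 + z W_{ψ(u)ψ(v)}`. Expanding the
product over edges makes `Z^σ_G(J + zW)` a polynomial in `z`, a sum over pairs `(S, ψ)` of an
edge set and a colouring agreeing with `σ`, weighted by `z^{|S|}`.

In `Z^{σ_{v,i}} Z^τ - Z^{τ_{v,i}} Z^σ`, exchanging the two colourings and the two edge sets on the
component of `v` in `S ∪ T` matches the terms of degree `|S| + |T| < d` bijectively and preserves
their weights: that component only reaches vertices at distance `< d` from `v`, where `σ = τ`.
Hence `z^d` divides this polynomial, so `P^σ - P^τ` is `z^d` times a function holomorphic on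
`𝔻_r`, where it is bounded by `2M`. The Schwarz lemma at `z = 1`, where `P^σ(1)` is the
conditional probability, gives the bound `2M r^{-d}`.
-/

open Finset

noncomputable section

namespace GraphHom

open scoped Classical

variable {V : Type*} {q : ℕ}

/-- The weight of an (unordered) edge `e` under the coloring `ψ` and the matrix `B`.
For a symmetric matrix `B` and `e = {u,w}` this is exactly `B (ψ u) (ψ w)`. -/
def edgeWeight {R : Type*} [Field R] (B : Matrix (Fin q) (Fin q) R) (ψ : V → Fin q)
    (e : Sym2 V) : R :=
  Sym2.lift ⟨fun u w => (B (ψ u) (ψ w) + B (ψ w) (ψ u)) / 2, fun u w => by ring⟩ e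

/-- The edges of `G` as a `Finset`. -/
def edges [Fintype V] (G : SimpleGraph V) : Finset (Sym2 V) :=
  G.edgeSet.toFinite.toFinset

/-- The graph homomorphism partition function with boundary condition `σ` on `Λ`:
`Z^σ_G(B) = ∑_{ψ : V → [q], ψ|_Λ = σ|_Λ} ∏_{uv ∈ E} B_{ψ(u),ψ(v)}`. -/
def Zcond {R : Type*} [Field R] [Fintype V] (G : SimpleGraph V)
    (B : Matrix (Fin q) (Fin q) R) (Λ : Finset V) (σ : V → Fin q) : R :=
  ∑ ψ : V → Fin q, if ∀ u ∈ Λ, ψ u = σ u then ∏ e ∈ edges G, edgeWeight B ψ e else 0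

/-- The interpolation matrix `J + z(A − J)`, i.e. the matrix with entries
`1 + z(A_{ij} − 1)`, for a real matrix `A`. -/
def intMat (A : Matrix (Fin q) (Fin q) ℝ) (z : ℂ) : Matrix (Fin q) (Fin q) ℂ :=
  fun i j => 1 + z * ((A i j : ℂ) - 1)

/-- The ratio `P^σ_{G,v,i;A}(z) = Z^{σ_{v,i}}_G(J + z(A−J)) / Z^σ_G(J + z(A−J))`. -/
def ratio [Fintype V] (G : SimpleGraph V) (A : Matrix (Fin q) (Fin q) ℝ)
    (Λ : Finset V) (σ : V → Fin q) (v : V) (i : Fin q) (z : ℂ) : ℂ :=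
  Zcond G (intMat A z) (insert v Λ) (Function.update σ v i) / Zcond G (intMat A z) Λ σ

/-- The conditional probability `Pr_μ[Ψ(v) = i ∣ σ]` in the graph homomorphism measure
`μ_{G,A}`:  `Z^{σ_{v,i}}_G(A) / Z^σ_G(A)`. -/
def condProb [Fintype V] (G : SimpleGraph V) (A : Matrix (Fin q) (Fin q) ℝ)
    (Λ : Finset V) (σ : V → Fin q) (v : V) (i : Fin q) : ℝ :=
  Zcond G A (insert v Λ) (Function.update σ v i) / Zcond G A Λ σ

/-- `G` has maximum degree at most `Δ`. -/
def MaxDegLE [Fintype V] (G : SimpleGraph V) (Δ : ℕ) : Prop :=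
  ∀ v : V, (univ.filter fun u => G.Adj v u).card ≤ Δ

end GraphHom

namespace GraphHom
open scoped Classical

/-- Vertices of a graph in a family: elements of a finite subset of `ℕ`. -/
abbrev Vtx (s : Finset ℕ) : Type := {x : ℕ // x ∈ s}

section Expansion

open Polynomial

variable {V : Type*} {q : ℕ} {R : Type*} [Field R]

lemma edgeWeight_mk (B : Matrix (Fin q) (Fin q) R) (ψ : V → Fin q) (a b : V) :
    edgeWeight B ψ s(a, b) = (B (ψ a) (ψ b) + B (ψ b) (ψ a)) / 2 := rfl

lemma edgeWeight_congr {B : Matrix (Fin q) (Fin q) R} {ψ φ : V → Fin q} {e : Sym2 V}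
    (h : ∀ y ∈ e, ψ y = φ y) : edgeWeight B ψ e = edgeWeight B φ e := by
  induction e using Sym2.ind with
  | _ a b => rw [edgeWeight_mk, edgeWeight_mk, h a (Sym2.mem_mk_left a b),
      h b (Sym2.mem_mk_right a b)]

lemma edgeWeight_one_add_mul [CharZero R] (W : Matrix (Fin q) (Fin q) R) (z : R) (ψ : V → Fin q)
    (e : Sym2 V) :
    edgeWeight (Matrix.of fun i j => 1 + z * W i j) ψ e = 1 + z * edgeWeight W ψ e := by
  induction e using Sym2.ind with
  | _ a b => simp only [edgeWeight_mk, Matrix.of_apply]; field_simp; ring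

lemma edgeWeight_map {S : Type*} [Field S] (f : R →+* S) (B : Matrix (Fin q) (Fin q) R)
    (ψ : V → Fin q) (e : Sym2 V) : edgeWeight (B.map f) ψ e = f (edgeWeight B ψ e) := by
  induction e using Sym2.ind with
  | _ a b => simp [edgeWeight_mk, map_div₀, map_ofNat]

lemma Zcond_map [Fintype V] {S : Type*} [Field S] (f : R →+* S) (G : SimpleGraph V)
    (B : Matrix (Fin q) (Fin q) R) (Λ : Finset V) (σ : V → Fin q) :
    Zcond G (B.map f) Λ σ = f (Zcond G B Λ σ) := by
  simp only [Zcond, map_sum, apply_ite f, map_zero, map_prod, edgeWeight_map]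

/-- A pair `(S, ψ)` indexes the term `z ^ #S * ∏_{e ∈ S} W_ψ(e)` of the expansion of
`Z^σ_G(J + z W)` obtained by writing each edge weight as `1 + z W_ψ(e)`. -/
abbrev Layer (V β : Type*) := Finset (Sym2 V) × (V → β)

def Layer.weight (W : Matrix (Fin q) (Fin q) R) (a : Layer V (Fin q)) : R :=
  ∏ e ∈ a.1, edgeWeight W a.2 e

def layers [Fintype V] (G : SimpleGraph V) : Finset (Layer V (Fin q)) :=
  (edges G).powerset ×ˢ univ

def zcondPoly [Fintype V] (W : Matrix (Fin q) (Fin q) R) (G : SimpleGraph V) (Λ : Finset V)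
    (σ : V → Fin q) : R[X] :=
  ∑ a ∈ (layers G).filter (fun a => ∀ u ∈ Λ, a.2 u = σ u), C (a.weight W) * X ^ #a.1

lemma eval_zcondPoly [Fintype V] [CharZero R] (W : Matrix (Fin q) (Fin q) R) (G : SimpleGraph V)
    (Λ : Finset V) (σ : V → Fin q) (z : R) :
    (zcondPoly W G Λ σ).eval z = Zcond G (Matrix.of fun i j => 1 + z * W i j) Λ σ := by
  rw [Zcond, zcondPoly, eval_finsetSum, sum_filter, layers, sum_product, sum_comm]
  refine sum_congr rfl fun ψ _ => ?_
  by_cases hψ : ∀ u ∈ Λ, ψ u = σ u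
  · simp only [if_pos hψ, edgeWeight_one_add_mul, prod_one_add, eval_mul, eval_C, eval_pow,
      eval_X, Layer.weight, prod_mul_distrib, prod_const]
    exact sum_congr rfl fun S _ => mul_comm _ _
  · simp only [if_neg hψ, sum_const_zero]

def pairCard {β : Type*} (x : Layer V β × Layer V β) : ℕ := #x.1.1 + #x.2.1

def pairTerm (W : Matrix (Fin q) (Fin q) R) (x : Layer V (Fin q) × Layer V (Fin q)) : R[X] :=
  C (x.1.weight W * x.2.weight W) * X ^ pairCard x

lemma zcondPoly_mul_zcondPoly [Fintype V] (W : Matrix (Fin q) (Fin q) R) (G : SimpleGraph V)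
    (Λ₁ Λ₂ : Finset V) (σ₁ σ₂ : V → Fin q) :
    zcondPoly W G Λ₁ σ₁ * zcondPoly W G Λ₂ σ₂ =
      ∑ x ∈ (layers G ×ˢ layers G).filter
          (fun x => (∀ u ∈ Λ₁, x.1.2 u = σ₁ u) ∧ ∀ u ∈ Λ₂, x.2.2 u = σ₂ u), pairTerm W x := by
  rw [zcondPoly, zcondPoly, sum_filter, sum_filter, sum_filter, sum_mul_sum, sum_product]
  refine sum_congr rfl fun a _ => sum_congr rfl fun b _ => ?_
  rw [ite_zero_mul_ite_zero, pairTerm, pairCard, C_mul, pow_add, mul_mul_mul_comm]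

end Expansion

section Mixing

variable {V β : Type*}

def mix (K : Set V) (a b : Layer V β) : Layer V β :=
  (a.1.filter (· ∈ K.sym2) ∪ b.1.filter (· ∉ K.sym2), K.piecewise a.2 b.2)

lemma mix_fst_subset (K : Set V) (a b : Layer V β) : (mix K a b).1 ⊆ a.1 ∪ b.1 :=
  union_subset_union (filter_subset _ _) (filter_subset _ _)

lemma mix_fst_union (K : Set V) (a b : Layer V β) :
    (mix K a b).1 ∪ (mix K b a).1 = a.1 ∪ b.1 := by
  ext e
  simp only [mix, mem_union, mem_filter]
  tauto

lemma card_mix_fst_add (K : Set V) (a b : Layer V β) :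
    #(mix K a b).1 + #(mix K b a).1 = #a.1 + #b.1 := by
  have ha := card_filter_add_card_filter_not (s := a.1) (· ∈ K.sym2)
  have hb := card_filter_add_card_filter_not (s := b.1) (· ∈ K.sym2)
  rw [mix, mix, card_union_of_disjoint (disjoint_filter_filter_not _ _ _),
    card_union_of_disjoint (disjoint_filter_filter_not _ _ _)]
  omega

lemma mix_mix (K : Set V) (a b : Layer V β) : mix K (mix K a b) (mix K b a) = a := by
  refine Prod.ext ?_ ?_
  · ext e
    simp only [mix, mem_union, mem_filter]
    tauto
  · funext u
    by_cases hu : u ∈ K <;> simp [mix, hu]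

variable {q : ℕ} {R : Type*} [Field R]

lemma weight_mix (W : Matrix (Fin q) (Fin q) R) (K : Set V) (a b : Layer V (Fin q))
    (hb : ∀ e ∈ b.1, e ∈ K.sym2 ∨ e ∈ Kᶜ.sym2) :
    (mix K a b).weight W = (∏ e ∈ a.1.filter (· ∈ K.sym2), edgeWeight W a.2 e) *
      ∏ e ∈ b.1.filter (· ∉ K.sym2), edgeWeight W b.2 e := by
  rw [Layer.weight, mix, prod_union (disjoint_filter_filter_not _ _ _)]
  congr 1 <;> refine prod_congr rfl fun e he => edgeWeight_congr fun y hy => ?_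
  · exact Set.piecewise_eq_of_mem _ _ _ (Set.mem_sym2_iff_subset.1 (mem_filter.1 he).2 hy)
  · obtain ⟨he, hK⟩ := mem_filter.1 he
    exact Set.piecewise_eq_of_notMem _ _ _
      (Set.mem_sym2_iff_subset.1 ((hb e he).resolve_left hK) hy)

lemma weight_mix_mul_weight_mix (W : Matrix (Fin q) (Fin q) R) (K : Set V)
    (a b : Layer V (Fin q)) (hK : ∀ e ∈ a.1 ∪ b.1, e ∈ K.sym2 ∨ e ∈ Kᶜ.sym2) :
    (mix K a b).weight W * (mix K b a).weight W = a.weight W * b.weight W := by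
  rw [weight_mix W K a b fun e he => hK e (mem_union_right _ he),
    weight_mix W K b a fun e he => hK e (mem_union_left _ he), Layer.weight, Layer.weight,
    ← prod_filter_mul_prod_filter_not a.1 (· ∈ K.sym2),
    ← prod_filter_mul_prod_filter_not b.1 (· ∈ K.sym2)]
  ring

end Mixing

section Swap

open SimpleGraph

variable {V : Type*}

lemma _root_.SimpleGraph.mem_sym2_or_mem_compl_sym2 {E : Finset (Sym2 V)} (v : V) {e : Sym2 V}
    (he : e ∈ E) :
    e ∈ {u | (fromEdgeSet (E : Set (Sym2 V))).Reachable v u}.sym2 ∨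
      e ∈ {u | (fromEdgeSet (E : Set (Sym2 V))).Reachable v u}ᶜ.sym2 := by
  induction e using Sym2.ind with
  | _ a b =>
    have hab : (fromEdgeSet (E : Set (Sym2 V))).Reachable a b := by
      by_cases h : a = b
      · exact h ▸ Reachable.refl a
      · exact (fromEdgeSet_adj _ |>.2 ⟨he, h⟩).reachable
    simp only [Set.mk_mem_sym2_iff, Set.mem_ofPred_eq, Set.mem_compl_iff]
    by_cases hva : (fromEdgeSet (E : Set (Sym2 V))).Reachable v a
    · exact .inl ⟨hva, hva.trans hab⟩
    · exact .inr ⟨hva, fun hvb => hva (hvb.trans hab.symm)⟩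

lemma _root_.SimpleGraph.edist_le_card_of_reachable_fromEdgeSet {G : SimpleGraph V}
    {E : Finset (Sym2 V)} (hE : (E : Set (Sym2 V)) ⊆ G.edgeSet) {v u : V}
    (h : (fromEdgeSet (E : Set (Sym2 V))).Reachable v u) : G.edist v u ≤ #E := by
  classical
  obtain ⟨p, hp⟩ := h.exists_isPath
  have hle : fromEdgeSet (E : Set (Sym2 V)) ≤ G :=
    (fromEdgeSet_le G).2 (Set.sdiff_subset.trans hE)
  have hcard : (fromEdgeSet (E : Set (Sym2 V))).edgeFinset ⊆ E := by
    intro e he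
    rw [mem_edgeFinset, edgeSet_fromEdgeSet] at he
    exact he.1
  calc G.edist v u ≤ (fromEdgeSet (E : Set (Sym2 V))).edist v u := edist_anti hle
    _ ≤ p.length := edist_le p
    _ ≤ #E := by exact_mod_cast hp.isTrail.length_le_card_edgeFinset.trans (card_le_card hcard)

variable {β : Type*}

def reachSet (v : V) (x : Layer V β × Layer V β) : Set V :=
  {u | (fromEdgeSet ((x.1.1 ∪ x.2.1 : Finset (Sym2 V)) : Set (Sym2 V))).Reachable v u}

def swapAt (v : V) (x : Layer V β × Layer V β) : Layer V β × Layer V β :=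
  (mix (reachSet v x) x.1 x.2, mix (reachSet v x) x.2 x.1)

lemma reachSet_swapAt (v : V) (x : Layer V β × Layer V β) :
    reachSet v (swapAt v x) = reachSet v x := by
  simp only [reachSet, swapAt, mix_fst_union]

lemma swapAt_swapAt (v : V) (x : Layer V β × Layer V β) : swapAt v (swapAt v x) = x := by
  conv_lhs => rw [swapAt, reachSet_swapAt]
  simp only [swapAt, mix_mix]

lemma pairCard_swapAt (v : V) (x : Layer V β × Layer V β) : pairCard (swapAt v x) = pairCard x :=
  card_mix_fst_add _ _ _

end Swap

section Cancellation

open Polynomial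

variable {V : Type*} {q : ℕ}

/-- The pairs of layers contributing to `Z^{σ_{v,i}}_G · Z^τ_G`. -/
def Admissible (v : V) (i : Fin q) (Λ : Finset V) (σ τ : V → Fin q)
    (x : Layer V (Fin q) × Layer V (Fin q)) : Prop :=
  (∀ u ∈ insert v Λ, x.1.2 u = Function.update σ v i u) ∧ ∀ u ∈ Λ, x.2.2 u = τ u

def admissiblePairs [Fintype V] (G : SimpleGraph V) (v : V) (i : Fin q) (Λ : Finset V)
    (σ τ : V → Fin q) : Finset (Layer V (Fin q) × Layer V (Fin q)) :=
  (layers G ×ˢ layers G).filter (Admissible v i Λ σ τ)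

lemma Admissible.swapAt {v : V} {i : Fin q} {Λ : Finset V} {σ τ : V → Fin q}
    {x : Layer V (Fin q) × Layer V (Fin q)} (hx : Admissible v i Λ σ τ x) (hv : v ∉ Λ)
    (hagree : ∀ u ∈ Λ, u ∈ reachSet v x → σ u = τ u) :
    Admissible v i Λ τ σ (swapAt v x) := by
  obtain ⟨hx₁, hx₂⟩ := hx
  have hvK : v ∈ reachSet v x := SimpleGraph.Reachable.refl v
  have hσ : ∀ u ∈ Λ, x.1.2 u = σ u := fun u hu => by
    simpa [Function.update_of_ne (ne_of_mem_of_not_mem hu hv)] using hx₁ u (mem_insert_of_mem hu)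
  refine ⟨fun u hu => ?_, fun u hu => ?_⟩
  · rcases mem_insert.1 hu with rfl | hu
    · simpa [GraphHom.swapAt, mix, hvK] using hx₁ u (mem_insert_self u Λ)
    · by_cases huK : u ∈ reachSet v x
      · simp [GraphHom.swapAt, mix, huK, ne_of_mem_of_not_mem hu hv, hσ u hu, hagree u hu huK]
      · simp [GraphHom.swapAt, mix, huK, ne_of_mem_of_not_mem hu hv, hx₂ u hu]
  · by_cases huK : u ∈ reachSet v x
    · simp [GraphHom.swapAt, mix, huK, hx₂ u hu, hagree u hu huK]
    · simp [GraphHom.swapAt, mix, huK, hσ u hu]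

variable [Fintype V]

lemma mem_layers_swapAt {G : SimpleGraph V} (v : V) {x : Layer V (Fin q) × Layer V (Fin q)}
    (hx : x ∈ layers G ×ˢ layers G) : swapAt v x ∈ layers G ×ˢ layers G := by
  simp only [layers, mem_product, mem_powerset, mem_univ, and_true] at hx ⊢
  exact ⟨(mix_fst_subset _ _ _).trans (union_subset hx.1 hx.2),
    (mix_fst_subset _ _ _).trans (union_subset hx.2 hx.1)⟩

lemma eq_of_mem_reachSet {G : SimpleGraph V} {v : V} {Λ : Finset V} {σ τ : V → Fin q} {d : ℕ}
    (hdist : ∀ u ∈ Λ, σ u ≠ τ u → (d : ℕ∞) ≤ G.edist v u)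
    {x : Layer V (Fin q) × Layer V (Fin q)} (hx : x ∈ layers G ×ˢ layers G)
    (hsmall : pairCard x < d) : ∀ u ∈ Λ, u ∈ reachSet v x → σ u = τ u := by
  intro u hu huK
  by_contra hne
  have hE : ((x.1.1 ∪ x.2.1 : Finset (Sym2 V)) : Set (Sym2 V)) ⊆ G.edgeSet := by
    simp only [layers, mem_product, mem_powerset, mem_univ, and_true] at hx
    intro e he
    simpa [edges] using union_subset hx.1 hx.2 (mem_coe.1 he)
  have hd : (d : ℕ∞) ≤ #(x.1.1 ∪ x.2.1) :=
    (hdist u hu hne).trans (SimpleGraph.edist_le_card_of_reachable_fromEdgeSet hE huK)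
  have := card_union_le x.1.1 x.2.1
  have : d ≤ #(x.1.1 ∪ x.2.1) := by exact_mod_cast hd
  rw [pairCard] at hsmall
  omega

lemma swapAt_mem_admissiblePairs {G : SimpleGraph V} {v : V} {i : Fin q} {Λ : Finset V}
    (hv : v ∉ Λ) {σ τ : V → Fin q} {d : ℕ}
    (hdist : ∀ u ∈ Λ, σ u ≠ τ u → (d : ℕ∞) ≤ G.edist v u)
    {x : Layer V (Fin q) × Layer V (Fin q)}
    (hx : x ∈ (admissiblePairs G v i Λ σ τ).filter (pairCard · < d)) :
    swapAt v x ∈ (admissiblePairs G v i Λ τ σ).filter (pairCard · < d) := by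
  simp only [admissiblePairs, mem_filter, pairCard_swapAt] at hx ⊢
  obtain ⟨⟨hxL, hadm⟩, hsmall⟩ := hx
  exact ⟨⟨mem_layers_swapAt v hxL, hadm.swapAt hv (eq_of_mem_reachSet hdist hxL hsmall)⟩,
    hsmall⟩

end Cancellation

section Divisibility

open Polynomial

variable {V : Type*} {q : ℕ} {R : Type*} [Field R]

lemma pairTerm_swapAt (W : Matrix (Fin q) (Fin q) R) (v : V)
    (x : Layer V (Fin q) × Layer V (Fin q)) : pairTerm W (swapAt v x) = pairTerm W x := by
  rw [pairTerm, pairTerm, pairCard_swapAt, swapAt,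
    weight_mix_mul_weight_mix W (reachSet v x) x.1 x.2
      fun e he => SimpleGraph.mem_sym2_or_mem_compl_sym2 v he]

variable [Fintype V]

lemma sum_pairTerm_admissiblePairs_card_lt_comm (W : Matrix (Fin q) (Fin q) R)
    {G : SimpleGraph V} {v : V} {i : Fin q} {Λ : Finset V} (hv : v ∉ Λ) {σ τ : V → Fin q}
    {d : ℕ} (hdist : ∀ u ∈ Λ, σ u ≠ τ u → (d : ℕ∞) ≤ G.edist v u) :
    ∑ x ∈ (admissiblePairs G v i Λ σ τ).filter (pairCard · < d), pairTerm W x =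
      ∑ x ∈ (admissiblePairs G v i Λ τ σ).filter (pairCard · < d), pairTerm W x :=
  sum_nbij' (swapAt v) (swapAt v) (fun _ => swapAt_mem_admissiblePairs hv hdist)
    (fun _ => swapAt_mem_admissiblePairs hv fun u hu h => hdist u hu (Ne.symm h))
    (fun x _ => swapAt_swapAt v x) (fun x _ => swapAt_swapAt v x)
    (fun x _ => (pairTerm_swapAt W v x).symm)

theorem X_pow_dvd_zcondPoly_mul_sub (W : Matrix (Fin q) (Fin q) R) (G : SimpleGraph V)
    {v : V} (i : Fin q) {Λ : Finset V} {σ τ : V → Fin q} {d : ℕ} (hv : v ∉ Λ)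
    (hdist : ∀ u ∈ Λ, σ u ≠ τ u → (d : ℕ∞) ≤ G.edist v u) :
    X ^ d ∣ zcondPoly W G (insert v Λ) (Function.update σ v i) * zcondPoly W G Λ τ -
      zcondPoly W G (insert v Λ) (Function.update τ v i) * zcondPoly W G Λ σ := by
  have hsum : ∀ σ τ : V → Fin q,
      zcondPoly W G (insert v Λ) (Function.update σ v i) * zcondPoly W G Λ τ =
        ∑ x ∈ admissiblePairs G v i Λ σ τ, pairTerm W x :=
    fun σ τ => by rw [zcondPoly_mul_zcondPoly]; congr
  have hlarge : ∀ σ τ : V → Fin q, X ^ d ∣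
      ∑ x ∈ (admissiblePairs G v i Λ σ τ).filter (¬ pairCard · < d), pairTerm W x :=
    fun σ τ => dvd_sum fun x hx => (pow_dvd_pow X (not_lt.1 (mem_filter.1 hx).2)).mul_left _
  rw [hsum, hsum, ← sum_filter_add_sum_filter_not (admissiblePairs G v i Λ σ τ) (pairCard · < d),
    ← sum_filter_add_sum_filter_not (admissiblePairs G v i Λ τ σ) (pairCard · < d),
    sum_pairTerm_admissiblePairs_card_lt_comm W hv hdist, add_sub_add_left_eq_sub]
  exact dvd_sub (hlarge σ τ) (hlarge τ σ)

end Divisibility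

section Schwarz

open Metric Asymptotics Topology

theorem _root_.Complex.norm_pow_mul_le_of_forall_norm_pow_mul_le {φ : ℂ → ℂ} {r B : ℝ}
    {d : ℕ} (hφ : DifferentiableOn ℂ φ (ball 0 r)) (hB : ∀ z ∈ ball (0 : ℂ) r, ‖z ^ d * φ z‖ ≤ B)
    {z : ℂ} (hz : z ∈ ball (0 : ℂ) r) : ‖z ^ d * φ z‖ ≤ B * (‖z‖ / r) ^ d := by
  rcases d with _ | n
  · simpa using hB z hz
  have hr : 0 < r := nonempty_ball.1 ⟨z, hz⟩
  have hφ0 : ContinuousAt φ 0 := hφ.continuousOn.continuousAt (ball_mem_nhds 0 hr)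
  have hcont : ContinuousAt (fun w : ℂ => w * φ w) 0 := continuousAt_id.mul hφ0
  have hsmall : (fun w : ℂ => w * φ w) =o[𝓝 0] (fun _ => (1 : ℝ)) :=
    (isLittleO_one_iff ℝ).2 (by simpa using hcont.tendsto)
  have hlittle : (fun w : ℂ => w ^ (n + 1) * φ w - 0 ^ (n + 1) * φ 0) =o[𝓝 0]
      (fun w => ‖w - 0‖ ^ n) := by
    refine (hsmall.mul_isBigO (isBigO_refl (fun w : ℂ => w ^ n) _).norm_right).congr
      (fun w => by ring) (fun w => by simp [norm_pow])
  simpa using Complex.dist_le_mul_div_pow_of_mapsTo_ball_of_isLittleO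
    (f := fun w => w ^ (n + 1) * φ w) ((differentiableOn_id.pow _).mul hφ)
    (fun w hw => by simpa using hB w hw) hlittle hz

end Schwarz

section RatioBound

open Polynomial Metric

lemma norm_eval_div_sub_eval_div_le {P₁ P₂ P₃ P₄ : ℂ[X]} {r B : ℝ} {d : ℕ}
    (hdvd : X ^ d ∣ P₁ * P₄ - P₃ * P₂)
    (hne : ∀ z ∈ ball (0 : ℂ) r, P₂.eval z ≠ 0 ∧ P₄.eval z ≠ 0)
    (hB : ∀ z ∈ ball (0 : ℂ) r, ‖P₁.eval z / P₂.eval z - P₃.eval z / P₄.eval z‖ ≤ B)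
    {z : ℂ} (hz : z ∈ ball (0 : ℂ) r) :
    ‖P₁.eval z / P₂.eval z - P₃.eval z / P₄.eval z‖ ≤ B * (‖z‖ / r) ^ d := by
  obtain ⟨g, hg⟩ := hdvd
  have hF : ∀ w ∈ ball (0 : ℂ) r, P₁.eval w / P₂.eval w - P₃.eval w / P₄.eval w =
      w ^ d * (g.eval w / (P₂.eval w * P₄.eval w)) := by
    intro w hw
    obtain ⟨h₂, h₄⟩ := hne w hw
    have hgw := congrArg (eval w) hg
    simp only [eval_sub, eval_mul, eval_pow, eval_X] at hgw
    field_simp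
    linear_combination hgw
  have hφ : DifferentiableOn ℂ (fun w => g.eval w / (P₂.eval w * P₄.eval w)) (ball 0 r) :=
    g.differentiable.differentiableOn.div
      (P₂.differentiable.mul P₄.differentiable).differentiableOn
      fun w hw => mul_ne_zero (hne w hw).1 (hne w hw).2
  rw [hF z hz]
  exact Complex.norm_pow_mul_le_of_forall_norm_pow_mul_le hφ (fun w hw => hF w hw ▸ hB w hw) hz

variable {V : Type*} [Fintype V] {q : ℕ}

def subAllOnes (A : Matrix (Fin q) (Fin q) ℝ) : Matrix (Fin q) (Fin q) ℂ :=
  Matrix.of fun i j => (A i j : ℂ) - 1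

lemma Zcond_intMat (G : SimpleGraph V) (A : Matrix (Fin q) (Fin q) ℝ) (Λ : Finset V)
    (σ : V → Fin q) (z : ℂ) :
    Zcond G (intMat A z) Λ σ = (zcondPoly (subAllOnes A) G Λ σ).eval z := by
  rw [eval_zcondPoly]
  rfl

lemma Zcond_intMat_one (G : SimpleGraph V) (A : Matrix (Fin q) (Fin q) ℝ) (Λ : Finset V)
    (σ : V → Fin q) : Zcond G (intMat A 1) Λ σ = Zcond G A Λ σ := by
  have hA : intMat A 1 = A.map Complex.ofRealHom := by
    ext i j
    simp [intMat]
  rw [hA, Zcond_map]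
  rfl

theorem abs_condProb_sub_condProb_le {G : SimpleGraph V} {A : Matrix (Fin q) (Fin q) ℝ}
    {r M : ℝ} (hr : 1 < r) {v : V} {i : Fin q} {Λ : Finset V} (hv : v ∉ Λ) {σ τ : V → Fin q}
    {d : ℕ} (hdist : ∀ u ∈ Λ, σ u ≠ τ u → (d : ℕ∞) ≤ G.edist v u)
    (hσ : ∀ z : ℂ, ‖z‖ < r → Zcond G (intMat A z) Λ σ ≠ 0 ∧ ‖ratio G A Λ σ v i z‖ ≤ M)
    (hτ : ∀ z : ℂ, ‖z‖ < r → Zcond G (intMat A z) Λ τ ≠ 0 ∧ ‖ratio G A Λ τ v i z‖ ≤ M) :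
    |condProb G A Λ σ v i - condProb G A Λ τ v i| ≤ 2 * M * r ^ (-(d : ℤ)) := by
  have hratio : ∀ (σ : V → Fin q) (z : ℂ), ratio G A Λ σ v i z =
      (zcondPoly (subAllOnes A) G (insert v Λ) (Function.update σ v i)).eval z /
        (zcondPoly (subAllOnes A) G Λ σ).eval z := by
    simp only [ratio, Zcond_intMat, implies_true]
  have hcondProb : ∀ σ : V → Fin q, (condProb G A Λ σ v i : ℂ) = ratio G A Λ σ v i 1 := by
    simp only [condProb, ratio, Zcond_intMat_one, Complex.ofReal_div, implies_true]
  have hbound := norm_eval_div_sub_eval_div_le (r := r) (B := 2 * M) (z := 1)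
    (X_pow_dvd_zcondPoly_mul_sub (subAllOnes A) G i hv hdist)
    (fun z hz => by
      simp only [← Zcond_intMat]
      exact ⟨(hσ z (mem_ball_zero_iff.1 hz)).1, (hτ z (mem_ball_zero_iff.1 hz)).1⟩)
    (fun z hz => by
      rw [← hratio, ← hratio, two_mul]
      exact (norm_sub_le _ _).trans (add_le_add (hσ z (mem_ball_zero_iff.1 hz)).2
        (hτ z (mem_ball_zero_iff.1 hz)).2))
    (mem_ball_zero_iff.2 (by simpa using hr))
  rw [← hratio, ← hratio, ← hcondProb, ← hcondProb, ← Complex.ofReal_sub,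
    Complex.norm_real, Real.norm_eq_abs] at hbound
  simpa [zpow_neg, div_eq_mul_inv] using hbound

end RatioBound

theorem bounded_hom_ratios_imply_SSM_general (q : ℕ)
    (A : Matrix (Fin q) (Fin q) ℝ)
    (𝒢 : ∀ s : Finset ℕ, SimpleGraph (Vtx s) → Prop)
    (r M : ℝ) (hr : 1 < r) (hM : 0 < M)
    (hbound : ∀ z : ℂ, ‖z‖ < r → ∀ s G, 𝒢 s G →
      ∀ (v : Vtx s) (i : Fin q) (Λ : Finset (Vtx s)), v ∉ Λ → ∀ σ : Vtx s → Fin q,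
        Zcond G (intMat A z) Λ σ ≠ 0 ∧ ‖ratio G A Λ σ v i z‖ ≤ M) :
    ∃ C > 0, ∀ s G, 𝒢 s G →
      ∀ (v : Vtx s) (i : Fin q) (Λ : Finset (Vtx s)), v ∉ Λ →
        ∀ σ τ : Vtx s → Fin q, ∀ d : ℕ,
          (∀ u ∈ Λ, σ u ≠ τ u → (d : ℕ∞) ≤ G.edist v u) →
          |condProb G A Λ σ v i - condProb G A Λ τ v i| ≤ C * r ^ (-(d : ℤ)) :=
  ⟨2 * M, by positivity, fun s G hG v i Λ hv σ τ _ hdist =>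
    abs_condProb_sub_condProb_le hr hv hdist (fun z hz => hbound z hz s G hG v i Λ hv σ)
      (fun z hz => hbound z hz s G hG v i Λ hv τ)⟩

/-- Let `A` be a nonnegative, nonzero, symmetric real `q × q` matrix and
`𝒢` a family of finite graphs.  Suppose there are `r > 1` and `M > 0` such that for all
`z` in the open disk `𝔻_r`, all `G ∈ 𝒢`, all vertices `v`, colors `i` and boundary
conditions `σ` on sets `Λ ⊆ V ∖ {v}`, the ratio `P^σ_{G,v,i;A}` has no pole at `z`
(its denominator is nonzero) and `|P^σ_{G,v,i;A}(z)| ≤ M`.  Then there is `C > 0` such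
that `μ_{G,A}` satisfies strong spatial mixing on `𝒢` with exponential rate `r`. -/
theorem bounded_hom_ratios_imply_SSM (q : ℕ) (hq : 2 ≤ q)
    (A : Matrix (Fin q) (Fin q) ℝ) (hsymm : ∀ i j, A i j = A j i)
    (hnonneg : ∀ i j, 0 ≤ A i j) (hnonzero : A ≠ 0)
    (𝒢 : ∀ s : Finset ℕ, SimpleGraph (Vtx s) → Prop)
    (r M : ℝ) (hr : 1 < r) (hM : 0 < M)
    (hbound : ∀ z : ℂ, ‖z‖ < r → ∀ s G, 𝒢 s G →
      ∀ (v : Vtx s) (i : Fin q) (Λ : Finset (Vtx s)), v ∉ Λ → ∀ σ : Vtx s → Fin q,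
        Zcond G (intMat A z) Λ σ ≠ 0 ∧ ‖ratio G A Λ σ v i z‖ ≤ M) :
    ∃ C > 0, ∀ s G, 𝒢 s G →
      ∀ (v : Vtx s) (i : Fin q) (Λ : Finset (Vtx s)), v ∉ Λ →
        ∀ σ τ : Vtx s → Fin q, ∀ d : ℕ,
          (∀ u ∈ Λ, σ u ≠ τ u → (d : ℕ∞) ≤ G.edist v u) →
          |condProb G A Λ σ v i - condProb G A Λ τ v i| ≤ C * r ^ (-(d : ℤ)) :=
  bounded_hom_ratios_imply_SSM_general q A 𝒢 r M hr hM hbound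

end GraphHom

end
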